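/- Engel condition for model structures (Section 2.4): Let c : ℝ⁴ → ℝ be a smooth function, where ℝ⁴ has coordinates (y,x,z,w). Define the vector fields W = ∂_w, i.e. W(p) = (0,0,0,1), and X_c(y,x,z,w) = cos(c)·∂_z + sin(c)·(cos(z)·∂_x + sin(z)·∂_y), i.e. X_c(p) = (sin(c(p))·sin(z), sin(c(p))·cos(z), cos(c(p)), 0) in (y,x,z,w)-components. Then for every point p ∈ ℝ⁴, the four vectors W(p), X_c(p), [W,X_c](p), [X_c,[W,X_c]](p) form a basis of ℝ⁴ if and only if ∂c/∂w(p) ≠ 0. -/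

import Mathlib

open Real

/-- Lie bracket of vector fields on a normed space:
`[V, V'](p) = DV'(p)(V(p)) − DV(p)(V'(p))`. -/
noncomputable def vbracket {E : Type*} [NormedAddCommGroup E] [NormedSpace ℝ E]
    (V V' : E → E) : E → E :=
  fun p => fderiv ℝ V' p (V p) - fderiv ℝ V p (V' p)

/-- Four vectors form a basis of ℝ⁴. -/
def IsBasis4 (v : Fin 4 → (Fin 4 → ℝ)) : Prop :=
  LinearIndependent ℝ v ∧ Submodule.span ℝ (Set.range v) = ⊤

/-- The vector field `W = ∂_w` on ℝ⁴ with coordinates `(y,x,z,w)`. -/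
def Wfield : (Fin 4 → ℝ) → (Fin 4 → ℝ) := fun _ => ![0, 0, 0, 1]

/-- `X_c = cos(c)·∂_z + sin(c)·(cos(z)·∂_x + sin(z)·∂_y)`, in `(y,x,z,w)`-components
`(sin(c)·sin(z), sin(c)·cos(z), cos(c), 0)`. -/
noncomputable def Xc (c : (Fin 4 → ℝ) → ℝ) : (Fin 4 → ℝ) → (Fin 4 → ℝ) :=
  fun p => ![sin (c p) * sin (p 2), sin (c p) * cos (p 2), cos (c p), 0]

/-! ### Auxiliary definitions and lemmas -/

/-- The coordinate projection `q ↦ q 2` as a continuous linear map. -/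
noncomputable def pr2 : (Fin 4 → ℝ) →L[ℝ] ℝ := ContinuousLinearMap.proj 2

/-- The `w`-partial derivative of `c`. -/
noncomputable def gw (c : (Fin 4 → ℝ) → ℝ) : (Fin 4 → ℝ) → ℝ :=
  fun p => fderiv ℝ c p ![0, 0, 0, 1]

lemma gw_contDiff {c : (Fin 4 → ℝ) → ℝ} (hc : ContDiff ℝ (⊤ : ℕ∞) c) : ContDiff ℝ (⊤ : ℕ∞) (gw c) :=
  (hc.fderiv_right (by simp)).clm_apply contDiff_const

/-- The bracket `[W, X_c]` written explicitly. -/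
noncomputable def Yv (c : (Fin 4 → ℝ) → ℝ) : (Fin 4 → ℝ) → (Fin 4 → ℝ) := fun p =>
  ![cos (c p) * gw c p * sin (p 2), cos (c p) * gw c p * cos (p 2), -(sin (c p) * gw c p), 0]

lemma hasFDerivAt_Xc (c : (Fin 4 → ℝ) → ℝ) (hc : ContDiff ℝ (⊤ : ℕ∞) c) (p : Fin 4 → ℝ) :
    HasFDerivAt (Xc c) (ContinuousLinearMap.pi
      ![sin (c p) • (cos (p 2) • pr2) + sin (p 2) • (cos (c p) • fderiv ℝ c p),
        sin (c p) • (-sin (p 2) • pr2) + cos (p 2) • (cos (c p) • fderiv ℝ c p),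
        -sin (c p) • fderiv ℝ c p,
        0]) p := by
  have hcp : HasFDerivAt c (fderiv ℝ c p) p := (hc.differentiable (by simp) p).hasFDerivAt
  have h2 : HasFDerivAt (fun q : Fin 4 → ℝ => q 2) pr2 p :=
    hasFDerivAt_apply (𝕜 := ℝ) 2 p
  apply hasFDerivAt_pi''
  intro i
  fin_cases i <;>
    simp only [Xc, ContinuousLinearMap.proj_pi, Matrix.cons_val_zero, Matrix.cons_val_one,
      Matrix.head_cons, Matrix.cons_val_two, Matrix.tail_cons, Matrix.cons_val_three,
      Fin.isValue]
  · exact hcp.sin.mul h2.sin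
  · exact hcp.sin.mul h2.cos
  · exact hcp.cos
  · exact hasFDerivAt_const 0 p

lemma fderiv_Xc_apply (c : (Fin 4 → ℝ) → ℝ) (hc : ContDiff ℝ (⊤ : ℕ∞) c) (p v : Fin 4 → ℝ) :
    fderiv ℝ (Xc c) p v =
      ![cos (c p) * fderiv ℝ c p v * sin (p 2) + sin (c p) * cos (p 2) * v 2,
        cos (c p) * fderiv ℝ c p v * cos (p 2) - sin (c p) * sin (p 2) * v 2,
        -(sin (c p) * fderiv ℝ c p v), 0] := by
  rw [(hasFDerivAt_Xc c hc p).fderiv]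
  funext i
  fin_cases i <;>
    simp [pr2, ContinuousLinearMap.pi_apply, ContinuousLinearMap.smul_apply,
      ContinuousLinearMap.add_apply, ContinuousLinearMap.proj_apply, smul_eq_mul] <;> ring

lemma bracket_W_Xc (c : (Fin 4 → ℝ) → ℝ) (hc : ContDiff ℝ (⊤ : ℕ∞) c) :
    vbracket Wfield (Xc c) = Yv c := by
  funext p
  unfold vbracket
  have h1 : fderiv ℝ Wfield p = 0 := fderiv_const_apply _
  rw [h1]
  simp only [ContinuousLinearMap.zero_apply, sub_zero]
  rw [show Wfield p = ![0, 0, 0, 1] from rfl, fderiv_Xc_apply c hc]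
  funext i
  fin_cases i <;> simp [Yv, gw]

lemma hasFDerivAt_Yv (c : (Fin 4 → ℝ) → ℝ) (hc : ContDiff ℝ (⊤ : ℕ∞) c) (p : Fin 4 → ℝ) :
    HasFDerivAt (Yv c) (ContinuousLinearMap.pi
      ![(cos (c p) * gw c p) • (cos (p 2) • pr2) +
          sin (p 2) • (cos (c p) • fderiv ℝ (gw c) p + gw c p • (-sin (c p) • fderiv ℝ c p)),
        (cos (c p) * gw c p) • (-sin (p 2) • pr2) +
          cos (p 2) • (cos (c p) • fderiv ℝ (gw c) p + gw c p • (-sin (c p) • fderiv ℝ c p)),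
        -(sin (c p) • fderiv ℝ (gw c) p + gw c p • (cos (c p) • fderiv ℝ c p)),
        0]) p := by
  have hcp : HasFDerivAt c (fderiv ℝ c p) p := (hc.differentiable (by simp) p).hasFDerivAt
  have hgp : HasFDerivAt (gw c) (fderiv ℝ (gw c) p) p :=
    ((gw_contDiff hc).differentiable (by simp) p).hasFDerivAt
  have h2 : HasFDerivAt (fun q : Fin 4 → ℝ => q 2) pr2 p :=
    hasFDerivAt_apply (𝕜 := ℝ) 2 p
  apply hasFDerivAt_pi''
  intro i
  fin_cases i <;>
    simp only [Yv, ContinuousLinearMap.proj_pi, Matrix.cons_val_zero, Matrix.cons_val_one,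
      Matrix.head_cons, Matrix.cons_val_two, Matrix.tail_cons, Matrix.cons_val_three,
      Fin.isValue]
  · exact (hcp.cos.mul hgp).mul h2.sin
  · exact (hcp.cos.mul hgp).mul h2.cos
  · exact (hcp.sin.mul hgp).neg
  · exact hasFDerivAt_const 0 p

lemma fderiv_Yv_apply (c : (Fin 4 → ℝ) → ℝ) (hc : ContDiff ℝ (⊤ : ℕ∞) c) (p v : Fin 4 → ℝ) :
    fderiv ℝ (Yv c) p v =
      ![cos (c p) * gw c p * cos (p 2) * v 2 +
          sin (p 2) * (cos (c p) * fderiv ℝ (gw c) p v - sin (c p) * gw c p * fderiv ℝ c p v),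
        -(cos (c p) * gw c p * sin (p 2) * v 2) +
          cos (p 2) * (cos (c p) * fderiv ℝ (gw c) p v - sin (c p) * gw c p * fderiv ℝ c p v),
        -(sin (c p) * fderiv ℝ (gw c) p v + cos (c p) * gw c p * fderiv ℝ c p v),
        0] := by
  rw [(hasFDerivAt_Yv c hc p).fderiv]
  funext i
  fin_cases i <;>
    simp [pr2, ContinuousLinearMap.pi_apply, ContinuousLinearMap.smul_apply,
      ContinuousLinearMap.add_apply, ContinuousLinearMap.proj_apply, smul_eq_mul] <;> ring

lemma detRow_eq (v : Fin 4 → Fin 4 → ℝ) :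
    Matrix.detRowAlternating v = (Matrix.of v).det := rfl

lemma det_fin_four' (M : Matrix (Fin 4) (Fin 4) ℝ) : M.det =
    M 0 0*M 1 1*M 2 2*M 3 3 - M 0 0*M 1 1*M 2 3*M 3 2 - M 0 0*M 1 2*M 2 1*M 3 3
    + M 0 0*M 1 2*M 2 3*M 3 1 + M 0 0*M 1 3*M 2 1*M 3 2 - M 0 0*M 1 3*M 2 2*M 3 1
    - M 0 1*M 1 0*M 2 2*M 3 3 + M 0 1*M 1 0*M 2 3*M 3 2 + M 0 1*M 1 2*M 2 0*M 3 3
    - M 0 1*M 1 2*M 2 3*M 3 0 - M 0 1*M 1 3*M 2 0*M 3 2 + M 0 1*M 1 3*M 2 2*M 3 0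
    + M 0 2*M 1 0*M 2 1*M 3 3 - M 0 2*M 1 0*M 2 3*M 3 1 - M 0 2*M 1 1*M 2 0*M 3 3
    + M 0 2*M 1 1*M 2 3*M 3 0 + M 0 2*M 1 3*M 2 0*M 3 1 - M 0 2*M 1 3*M 2 1*M 3 0
    - M 0 3*M 1 0*M 2 1*M 3 2 + M 0 3*M 1 0*M 2 2*M 3 1 + M 0 3*M 1 1*M 2 0*M 3 2
    - M 0 3*M 1 1*M 2 2*M 3 0 - M 0 3*M 1 2*M 2 0*M 3 1 + M 0 3*M 1 2*M 2 1*M 3 0 := by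
  rw [Matrix.det_succ_row_zero, Fin.sum_univ_four]
  simp [Matrix.det_fin_three, Matrix.submatrix_apply, Fin.succAbove,
    show (Fin.succ 2 : Fin 4) = 3 from rfl, show ((2:Fin 3).castSucc : Fin 4) = 2 from rfl,
    show ¬((2:Fin 4) < 2) from by decide, show (2:Fin 4) < 3 from by decide,
    show ((3 : Fin 4) : ℕ) = 3 from rfl, show ((-1:ℝ))^(3:ℕ) = -1 from by norm_num]
  ring

/-- Engel condition for model structures (Section 2.4): the plane field with angular
function `c` is Engel at `p` — i.e. `W, X_c, [W,X_c], [X_c,[W,X_c]]` form a basis of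
ℝ⁴ at `p` — if and only if `∂c/∂w(p) ≠ 0`. -/
theorem model_structure_engel_iff
    (c : (Fin 4 → ℝ) → ℝ) (hc : ContDiff ℝ (⊤ : ℕ∞) c) :
    ∀ p : Fin 4 → ℝ,
      IsBasis4
        ![Wfield p, Xc c p, vbracket Wfield (Xc c) p,
          vbracket (Xc c) (vbracket Wfield (Xc c)) p]
      ↔ fderiv ℝ c p ![0, 0, 0, 1] ≠ 0 := by
  intro p
  rw [bracket_W_Xc c hc]
  set S := sin (c p) with hS
  set C := cos (c p) with hC
  set sz := sin (p 2) with hsz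
  set cz := cos (p 2) with hcz
  set G := gw c p with hG
  set A := fderiv ℝ (gw c) p (Xc c p) with hA
  set B := fderiv ℝ c p (Xc c p) with hB
  set F := fderiv ℝ c p (Yv c p) with hF
  have hZ : vbracket (Xc c) (Yv c) p =
      ![C * G * cz * C + sz * (C * A - S * G * B) - (C * F * sz - S * cz * (S * G)),
        -(C * G * sz * C) + cz * (C * A - S * G * B) - (C * F * cz + S * sz * (S * G)),
        -(S * A + C * G * B) + S * F,
        0] := by
    show fderiv ℝ (Yv c) p (Xc c p) - fderiv ℝ (Xc c) p (Yv c p) = _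
    rw [fderiv_Yv_apply c hc, fderiv_Xc_apply c hc]
    funext i
    fin_cases i <;>
      simp [show Xc c p 2 = C from rfl, show Yv c p 2 = -(S * G) from rfl] <;> ring
  have hdet : (Pi.basisFun ℝ (Fin 4)).det
      ![Wfield p, Xc c p, Yv c p, vbracket (Xc c) (Yv c) p] = G ^ 2 := by
    rw [Pi.basisFun_det, detRow_eq, hZ, det_fin_four']
    simp only [Matrix.of_apply, Matrix.cons_val_zero, Matrix.cons_val_one, Matrix.head_cons,
      Matrix.cons_val_two, Matrix.tail_cons, Matrix.cons_val_three,
      show Wfield p = ![(0:ℝ),0,0,1] from rfl,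
      show Xc c p = ![S * sz, S * cz, C, 0] from rfl,
      show Yv c p = ![C * G * sz, C * G * cz, -(S * G), 0] from rfl]
    have hs2 : S ^ 2 + C ^ 2 = 1 := sin_sq_add_cos_sq (c p)
    have hz2 : sz ^ 2 + cz ^ 2 = 1 := sin_sq_add_cos_sq (p 2)
    linear_combination (G ^ 2 * (S ^ 2 + C ^ 2) ^ 2) * hz2 +
      (G ^ 2 * (S ^ 2 + C ^ 2 + 1)) * hs2
  have hbasis : IsBasis4 ![Wfield p, Xc c p, Yv c p, vbracket (Xc c) (Yv c) p] ↔
      IsUnit ((Pi.basisFun ℝ (Fin 4)).det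
        ![Wfield p, Xc c p, Yv c p, vbracket (Xc c) (Yv c) p]) :=
    Module.Basis.is_basis_iff_det _
  rw [hbasis, hdet, isUnit_iff_ne_zero]
  have : fderiv ℝ c p ![0, 0, 0, 1] = G := rfl
  rw [this]
  constructor
  · intro h hg
    exact h (by rw [hg]; ring)
  · intro h
    exact pow_ne_zero _ h
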